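/- arXiv:2309.05642 — 6 statements merged into one kernel-verified Lean document; each statement's English description precedes it below -/
import Mathlib

section
/- For every n ≥ 2 there exists an instance of proxy selection with n voters and 4 proposals in which a single dRep attracts n−1 of the n voters, yet the intrinsic score of the proposal elected under that dRep's presence is only 1, while the optimal intrinsic score is n; hence attracting n−1 voters can still yield only an n-approximation. -/
open Finset

/-- An instance of proxy selection: `intrinsic i j` is voter `i`'s intrinsic approval of
proposal `j`; `visible i j` records whether this preference is revealed to the voter
(the revealed preference is `some (intrinsic i j)` if visible and `⊥` otherwise). -/
structure PSInstance (n m : ℕ) where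
  intrinsic : Fin n → Fin m → Bool
  visible : Fin n → Fin m → Bool

namespace PSInstance

variable {n m : ℕ}

/-- Revealed preference of voter `i` on proposal `j`. -/
def revealed (I : PSInstance n m) (i : Fin n) (j : Fin m) : Option Bool :=
  if I.visible i j then some (I.intrinsic i j) else none

/-- The revealed set `R_i` of voter `i`. -/
def Rset (I : PSInstance n m) (i : Fin n) : Finset (Fin m) :=
  univ.filter fun j => I.visible i j

/-- `m_i = |R_i|`. -/
def mi (I : PSInstance n m) (i : Fin n) : ℕ := (I.Rset i).card

/-- Hamming distance between voter `i`'s revealed ballot and type `t`, restricted to `R_i`. -/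
def dist (I : PSInstance n m) (i : Fin n) (t : Fin m → Bool) : ℕ :=
  (univ.filter fun j => I.visible i j ∧ I.intrinsic i j ≠ t j).card

/-- Voter `i` (with reluctance parameter `k`) is attracted by a dRep of type `t`. -/
def Attracted (I : PSInstance n m) (k : ℕ) (i : Fin n) (t : Fin m → Bool) : Prop :=
  I.dist i t ≤ (I.mi i - k) / 2

instance (I : PSInstance n m) (k : ℕ) (i : Fin n) (t : Fin m → Bool) :
    Decidable (I.Attracted k i t) := by unfold Attracted; exact inferInstance

/-- Intrinsic approval score of proposal `j`. -/
def sc (I : PSInstance n m) (j : Fin m) : ℕ :=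
  (univ.filter fun i => I.intrinsic i j = true).card

/-- Revealed approval score of proposal `j`. -/
def rsc (I : PSInstance n m) (j : Fin m) : ℕ :=
  (univ.filter fun i => I.visible i j ∧ I.intrinsic i j = true).card

/-- `j` is an intrinsically optimal proposal (`win(P)`). -/
def IsOpt (I : PSInstance n m) (j : Fin m) : Prop := ∀ j', I.sc j' ≤ I.sc j

/-- Total score of proposal `j` given a family `D` of dReps and a delegation assignment
`deleg` (delegating voters contribute through their dRep's ballot, the rest vote their
revealed preferences directly). -/
def totalScore {ι : Type} (I : PSInstance n m) (D : ι → Fin m → Bool)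
    (deleg : Fin n → Option ι) (j : Fin m) : ℕ :=
  (univ.filter fun i => (match deleg i with
    | some d => D d j
    | none => I.visible i j && I.intrinsic i j) = true).card

/-- A delegation assignment is valid (w.r.t. per-voter reluctance parameters `k`) if every
delegating voter is attracted by their chosen dRep, and every voter attracted by at least
one dRep delegates (to an arbitrary one of them). -/
def ValidDeleg {ι : Type} (I : PSInstance n m) (k : Fin n → ℕ) (D : ι → Fin m → Bool)
    (deleg : Fin n → Option ι) : Prop :=
  (∀ i d, deleg i = some d → I.Attracted (k i) i (D d)) ∧
  (∀ i, (∃ d, I.Attracted (k i) i (D d)) → deleg i ≠ none)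

/-- `j` is elected: it maximizes total score, ties broken in favor of maximum intrinsic score. -/
def Elected {ι : Type} (I : PSInstance n m) (D : ι → Fin m → Bool)
    (deleg : Fin n → Option ι) (j : Fin m) : Prop :=
  (∀ j', I.totalScore D deleg j' ≤ I.totalScore D deleg j) ∧
  (∀ j', I.totalScore D deleg j' = I.totalScore D deleg j → I.sc j' ≤ I.sc j)

/-- `j` is elected when ties are broken in favor of maximum *revealed* score. -/
def ElectedRev {ι : Type} (I : PSInstance n m) (D : ι → Fin m → Bool)
    (deleg : Fin n → Option ι) (j : Fin m) : Prop :=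
  (∀ j', I.totalScore D deleg j' ≤ I.totalScore D deleg j) ∧
  (∀ j', I.totalScore D deleg j' = I.totalScore D deleg j → I.rsc j' ≤ I.rsc j)

end PSInstance

/-!
Everyone intrinsically approves proposal `0`, but nobody reveals it. Voter `0` reveals only a
disapproval of proposal `1`; every other voter reveals only disapprovals of proposals `2` and `3`.
The dRep approving exactly proposal `1` agrees with the latter voters on everything they reveal,
so it attracts all of them, while voter `0` (who reveals a single proposal, hence tolerates no
disagreement) votes directly and approves nothing. Proposal `1` thus collects `n - 1` votes and
all other proposals none, yet only voter `1` intrinsically approves it.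
-/

namespace PSInstance

variable {n m : ℕ}

lemma ValidDeleg.eq_none_iff {ι : Type} {I : PSInstance n m} {k : Fin n → ℕ}
    {D : ι → Fin m → Bool} {deleg : Fin n → Option ι} (h : I.ValidDeleg k D deleg) (i : Fin n) :
    deleg i = none ↔ ∀ d, ¬ I.Attracted (k i) i (D d) := by
  constructor
  · intro hi d hd
    exact h.2 i ⟨d, hd⟩ hi
  · intro hi
    cases hdi : deleg i with
    | none => rfl
    | some d => exact absurd (h.1 i d hdi) (hi d)

lemma totalScore_of_validDeleg_unit {I : PSInstance n m} {k : Fin n → ℕ} {t : Fin m → Bool}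
    {deleg : Fin n → Option Unit} (h : I.ValidDeleg k (fun _ => t) deleg) (j : Fin m) :
    I.totalScore (fun _ => t) deleg j =
      #{i | (if I.Attracted (k i) i t then t j else I.visible i j && I.intrinsic i j) = true} := by
  unfold totalScore
  congr 1
  refine filter_congr fun i _ => ?_
  by_cases hi : I.Attracted (k i) i t
  · cases hdi : deleg i with
    | none => exact absurd hdi (h.2 i ⟨(), hi⟩)
    | some _ => simp [hi]
  · have hdi : deleg i = none := (h.eq_none_iff i).2 fun _ => hi
    simp [hi, hdi]

end PSInstance

lemma card_filter_val_ne_zero (n : ℕ) : #{i : Fin n | (i : ℕ) ≠ 0} = n - 1 := by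
  cases n with
  | zero => simp
  | succ n => simp [filter_ne', Fin.val_eq_zero_iff]

lemma card_filter_val_eq_one {n : ℕ} (hn : 2 ≤ n) : #{i : Fin n | (i : ℕ) = 1} = 1 :=
  card_eq_one.2 ⟨⟨1, hn⟩, by ext i; simp [Fin.ext_iff]⟩

def hiddenConsensus (n : ℕ) : PSInstance n 4 where
  intrinsic i j := decide (j = 0 ∨ ((i : ℕ) = 1 ∧ j = 1))
  visible i j := if (i : ℕ) = 0 then decide (j = 1) else decide (j = 2 ∨ j = 3)

def approveOne : Fin 4 → Bool := fun j => decide (j = 1)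

namespace hiddenConsensus

lemma attracted_iff {n : ℕ} (i : Fin n) :
    (hiddenConsensus n).Attracted 0 i approveOne ↔ (i : ℕ) ≠ 0 := by
  by_cases hi0 : (i : ℕ) = 0 <;> by_cases hi1 : (i : ℕ) = 1 <;>
    simp [PSInstance.Attracted, PSInstance.dist, PSInstance.mi, PSInstance.Rset,
      hiddenConsensus, approveOne, hi0, hi1] <;> decide

lemma sc_zero (n : ℕ) : (hiddenConsensus n).sc 0 = n := by
  simp [PSInstance.sc, hiddenConsensus]

lemma isOpt_zero (n : ℕ) : (hiddenConsensus n).IsOpt 0 := fun j => by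
  rw [sc_zero]
  exact (card_filter_le _ _).trans_eq (card_fin n)

lemma sc_one {n : ℕ} (hn : 2 ≤ n) : (hiddenConsensus n).sc 1 = 1 := by
  simpa [PSInstance.sc, hiddenConsensus] using card_filter_val_eq_one hn

lemma totalScore_eq {n : ℕ} {deleg : Fin n → Option Unit}
    (h : (hiddenConsensus n).ValidDeleg (fun _ => 0) (fun _ => approveOne) deleg) (j : Fin 4) :
    (hiddenConsensus n).totalScore (fun _ => approveOne) deleg j = if j = 1 then n - 1 else 0 := by
  rw [PSInstance.totalScore_of_validDeleg_unit h]
  simp only [attracted_iff]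
  split_ifs with hj
  · rw [← card_filter_val_ne_zero]
    congr 1
    refine filter_congr fun i _ => ?_
    by_cases hi : (i : ℕ) = 0 <;> simp [hi, hj, approveOne, hiddenConsensus]
  · refine card_eq_zero.2 (filter_eq_empty_iff.2 fun i _ => ?_)
    by_cases hi : (i : ℕ) = 0 <;> simp [hi, hj, approveOne, hiddenConsensus]

end hiddenConsensus

/-- For every `n ≥ 2` there is an instance with `n` voters and 4 proposals
where a single dRep attracts `n - 1` voters, the optimal intrinsic score is `n`, yet the
elected proposal always has intrinsic score 1 (an `n`-approximation only). -/
theorem stmt0 (n : ℕ) (hn : 2 ≤ n) :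
    ∃ (I : PSInstance n 4) (t : Fin 4 → Bool),
      (Finset.univ.filter fun i => I.Attracted 0 i t).card = n - 1 ∧
      (∃ j, I.IsOpt j ∧ I.sc j = n) ∧
      (∀ deleg : Fin n → Option Unit,
        I.ValidDeleg (fun _ => 0) (fun _ => t) deleg →
        ∀ j, I.Elected (fun _ => t) deleg j → I.sc j = 1) := by
  refine ⟨hiddenConsensus n, approveOne, ?_, ⟨0, hiddenConsensus.isOpt_zero n,
    hiddenConsensus.sc_zero n⟩, fun deleg hdeleg j hj => ?_⟩
  · simpa only [hiddenConsensus.attracted_iff] using card_filter_val_ne_zero n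
  · have hj1 : j = 1 := by
      by_contra hne
      have hle := hj.1 1
      rw [hiddenConsensus.totalScore_eq hdeleg, hiddenConsensus.totalScore_eq hdeleg, if_pos rfl,
        if_neg hne] at hle
      omega
    rw [hj1, hiddenConsensus.sc_one hn]
end

section
/- For every odd m > 3 there exists an instance of proxy selection with n = m−1 voters and m proposals, with reluctance parameter k_i ≥ 1 for all voters, such that for every possible advertised type of a single dRep, the elected proposal has intrinsic score at most 2 while the optimal intrinsic score is n; consequently, a single dRep cannot achieve an approximation ratio better than n/2 when k > 0. -/
open Finset

/-! Voters `2c, 2c + 1` and proposals `2c, 2c + 1` form pair `c`. Voter `2c` reveals approval of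
both proposals of its pair, voter `2c + 1` approval of `2c` and disapproval of `2c + 1`; every
voter also approves the hidden proposal `m - 1`, which nobody reveals. A single dRep can attract
at most one voter of a pair, and whoever it attracts forces it to approve some proposal `2c`.
That proposal then collects every delegated vote plus the direct vote of the unattracted partner,
so it strictly beats the hidden proposal, and every other proposal has intrinsic score at most 2. -/

open Finset

namespace PSInstance

variable {n m : ℕ} (I : PSInstance n m)

theorem sc_le_card (j : Fin m) : I.sc j ≤ n :=
  (card_filter_le _ _).trans_eq (card_fin n)

theorem isOpt_of_sc_eq {j : Fin m} (h : I.sc j = n) : I.IsOpt j :=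
  fun j' => (I.sc_le_card j').trans h.ge

variable {I}

/-- When `m_i < k + 2`, the threshold `⌊(m_i - k)/2⌋` is `0`. -/
theorem Attracted.intrinsic_eq {k : ℕ} {i : Fin n} {t : Fin m → Bool} (hmi : I.mi i < k + 2)
    (hA : I.Attracted k i t) {j : Fin m} (hv : I.visible i j = true) :
    I.intrinsic i j = t j := by
  have hdist : I.dist i t = 0 := by
    unfold Attracted at hA
    omega
  rw [dist, card_eq_zero, filter_eq_empty_iff] at hdist
  simpa [hv] using hdist (mem_univ j)

theorem totalScore_le_card_delegating {ι : Type} {D : ι → Fin m → Bool}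
    {deleg : Fin n → Option ι} {j : Fin m} (hj : ∀ i, I.visible i j = false) :
    I.totalScore D deleg j ≤ #{i | deleg i ≠ none} := by
  refine card_le_card fun i hi => ?_
  simp only [mem_filter, mem_univ, true_and] at hi ⊢
  intro hnone
  simp [hnone, hj i] at hi

theorem totalScore_lt_of_forall_visible_eq_false {ι : Type} {D : ι → Fin m → Bool}
    {deleg : Fin n → Option ι} {j e : Fin m} (hj : ∀ i, I.visible i j = false)
    (he : ∀ i d, deleg i = some d → D d e = true) {v : Fin n} (hv : deleg v = none)
    (hve : I.visible v e = true ∧ I.intrinsic v e = true) :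
    I.totalScore D deleg j < I.totalScore D deleg e := by
  refine (totalScore_le_card_delegating hj).trans_lt (card_lt_card ?_)
  rw [ssubset_iff_of_subset]
  · exact ⟨v, by simp [hv, hve], by simp [hv]⟩
  · intro i hi
    simp only [mem_filter, mem_univ, true_and] at hi ⊢
    obtain ⟨d, hd⟩ := Option.ne_none_iff_exists'.mp hi
    simp [hd, he i d hd]

end PSInstance

theorem card_filter_div_two_eq_le_two (n c : ℕ) : #{i : Fin n | i.val / 2 = c} ≤ 2 := by
  calc #{i : Fin n | i.val / 2 = c}
      ≤ #(Ico (2 * c) (2 * c + 2)) := by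
        refine card_le_card_of_injOn Fin.val (fun i hi => ?_) Fin.val_injective.injOn
        simp only [coe_filter, mem_univ, true_and, Set.mem_ofPred_eq] at hi
        simp only [coe_Ico, Set.mem_Ico]
        omega
    _ = 2 := by simp

def pairedInst (m : ℕ) : PSInstance (m - 1) m where
  intrinsic i j :=
    decide (j.val = m - 1 ∨ j.val / 2 = i.val / 2 ∧ (j.val % 2 = 0 ∨ i.val % 2 = 0))
  visible i j := decide (j.val / 2 = i.val / 2)

namespace pairedInst

variable {m : ℕ}

theorem visible_eq_false {j : Fin m} (hodd : Odd m) (hj : j.val = m - 1) (i : Fin (m - 1)) :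
    (pairedInst m).visible i j = false := by
  obtain ⟨r, rfl⟩ := hodd
  have := i.isLt
  simp only [pairedInst, decide_eq_false_iff_not]
  omega

theorem sc_eq {j : Fin m} (hj : j.val = m - 1) : (pairedInst m).sc j = m - 1 := by
  rw [PSInstance.sc, filter_true_of_mem fun i _ => by simp [pairedInst, hj], card_univ,
    Fintype.card_fin]

theorem sc_le_two {j : Fin m} (hj : j.val ≠ m - 1) : (pairedInst m).sc j ≤ 2 := by
  refine (card_le_card fun i hi => ?_).trans (card_filter_div_two_eq_le_two (m - 1) (j.val / 2))
  simp only [pairedInst, mem_filter, mem_univ, true_and, decide_eq_true_eq] at hi ⊢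
  omega

theorem mi_le_two (i : Fin (m - 1)) : (pairedInst m).mi i ≤ 2 := by
  simpa [PSInstance.mi, PSInstance.Rset, pairedInst] using
    card_filter_div_two_eq_le_two m (i.val / 2)

theorem eq_of_attracted {k : ℕ} {i : Fin (m - 1)} {t : Fin m → Bool} (hodd : Odd m)
    (hk : 1 ≤ k) (hA : (pairedInst m).Attracted k i t) {j : Fin m} (hj : j.val / 2 = i.val / 2) :
    t j = decide (j.val % 2 = 0 ∨ i.val % 2 = 0) := by
  have hvis : (pairedInst m).visible i j = true := by simp [pairedInst, hj]
  rw [← hA.intrinsic_eq (by have := mi_le_two i; omega) hvis]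
  obtain ⟨r, rfl⟩ := hodd
  have := i.isLt
  simp only [pairedInst, decide_eq_decide]
  omega

theorem not_both_attracted {k : Fin (m - 1) → ℕ} (hk : ∀ i, 1 ≤ k i)
    {t : Fin m → Bool} (hodd : Odd m) {c : ℕ} (hc : 2 * c + 1 < m - 1) :
    ¬ ((pairedInst m).Attracted (k ⟨2 * c, by omega⟩) ⟨2 * c, by omega⟩ t ∧
      (pairedInst m).Attracted (k ⟨2 * c + 1, hc⟩) ⟨2 * c + 1, hc⟩ t) := by
  rintro ⟨hA₀, hA₁⟩
  have h₀ := eq_of_attracted (j := ⟨2 * c + 1, by omega⟩) hodd (hk _) hA₀ (by simp; omega)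
  have h₁ := eq_of_attracted (j := ⟨2 * c + 1, by omega⟩) hodd (hk _) hA₁ (by simp)
  simp only [h₀, decide_eq_decide] at h₁
  omega

theorem not_elected {k : Fin (m - 1) → ℕ} (hm : 3 < m) (hodd : Odd m) (hk : ∀ i, 1 ≤ k i)
    {t : Fin m → Bool} {deleg : Fin (m - 1) → Option Unit}
    (hvd : (pairedInst m).ValidDeleg k (fun _ => t) deleg) {j : Fin m} (hj : j.val = m - 1) :
    ¬ (pairedInst m).Elected (fun _ => t) deleg j := by
  have hpair : ∀ i : Fin (m - 1), 2 * (i.val / 2) + 1 < m - 1 := by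
    obtain ⟨r, rfl⟩ := hodd
    omega
  obtain ⟨c, hc, he⟩ : ∃ c, ∃ hc : 2 * c + 1 < m - 1,
      ∀ i d, deleg i = some d → t ⟨2 * c, by omega⟩ = true := by
    by_cases hdel : ∃ i₀ d₀, deleg i₀ = some d₀
    · obtain ⟨i₀, d₀, hd₀⟩ := hdel
      refine ⟨i₀.val / 2, hpair i₀, fun _ _ _ => ?_⟩
      simpa using eq_of_attracted hodd (hk i₀) (hvd.1 i₀ d₀ hd₀)
        (j := ⟨2 * (i₀.val / 2), _⟩) (by simp)
    · push Not at hdel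
      exact ⟨0, by omega, fun i d hd => absurd hd (hdel i d)⟩
  obtain ⟨v, hv, hvc⟩ : ∃ v : Fin (m - 1), deleg v = none ∧ v.val / 2 = c := by
    have hnot : ∀ v : Fin (m - 1), ¬ (pairedInst m).Attracted (k v) v t → deleg v = none :=
      fun v hv => Option.eq_none_iff_forall_ne_some.mpr fun d hd => hv (hvd.1 v d hd)
    by_cases hA₀ : (pairedInst m).Attracted (k ⟨2 * c, by omega⟩) ⟨2 * c, by omega⟩ t
    · exact ⟨_, hnot _ fun hA₁ => not_both_attracted hk hodd hc ⟨hA₀, hA₁⟩,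
        by simp; omega⟩
    · exact ⟨_, hnot _ hA₀, by simp⟩
  intro hel
  have hlt := PSInstance.totalScore_lt_of_forall_visible_eq_false (visible_eq_false hodd hj)
    he hv (e := ⟨2 * c, by omega⟩) (by simp [pairedInst]; omega)
  exact absurd (hel.1 _) (not_le.mpr hlt)

end pairedInst

/-- For every odd `m > 3` there is an instance with `n = m - 1` voters and
`m` proposals such that for any reluctance parameters `k_i ≥ 1` and any single dRep, the
elected proposal has intrinsic score at most 2 while the optimal intrinsic score is `n`. -/
theorem stmt1 (m : ℕ) (hm : 3 < m) (hodd : Odd m) :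
    ∃ I : PSInstance (m - 1) m,
      (∃ j, I.IsOpt j ∧ I.sc j = m - 1) ∧
      ∀ k : Fin (m - 1) → ℕ, (∀ i, 1 ≤ k i) →
        ∀ t : Fin m → Bool, ∀ deleg : Fin (m - 1) → Option Unit,
          I.ValidDeleg k (fun _ => t) deleg →
          ∀ j, I.Elected (fun _ => t) deleg j → I.sc j ≤ 2 := by
  have hhidden : (⟨m - 1, by omega⟩ : Fin m).val = m - 1 := rfl
  refine ⟨pairedInst m, ⟨_, (pairedInst m).isOpt_of_sc_eq (pairedInst.sc_eq hhidden),
    pairedInst.sc_eq hhidden⟩, fun k hk t deleg hvd j hel => ?_⟩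
  by_cases hj : j.val = m - 1
  · exact absurd hel (pairedInst.not_elected hm hodd hk hvd hj)
  · exact pairedInst.sc_le_two hj
end

section
/- For every r ≥ 2 and every n divisible by r, there exists an instance of proxy selection with n voters, with reluctance parameter k > 0, in which the largest coherent set of voters has size r, and no single dRep can achieve an approximation ratio better than n/r. -/
/-
Split the voters into blocks of `r`. A block reveals exactly two proposals: one approved by
the whole block and one approved only by the block's leader; a further proposal is approved by
everybody and revealed to nobody. With `k = 2` a voter, revealing two proposals, delegates only
to a dRep agreeing with both, so no single dRep attracts a leader together with a non-leader:
every block keeps a voter who votes its common proposal directly. If the hidden proposal were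
elected, its votes all come from delegators, whose dRep then approves the common proposal of a
delegator's block, and that proposal gets strictly more votes. Every other proposal is
approved within a single block, so has intrinsic score at most `r`.
-/

open Finset

namespace PSInstance

variable {n m : ℕ} {ι : Type}

theorem attracted_iff_forall_visible (I : PSInstance n m) {k : ℕ} {i : Fin n}
    (hk : I.mi i ≤ k + 1) (t : Fin m → Bool) :
    I.Attracted k i t ↔ ∀ j, I.visible i j = true → I.intrinsic i j = t j := by
  have hzero : (I.mi i - k) / 2 = 0 := Nat.div_eq_of_lt (by omega)
  simp only [Attracted, dist, hzero, Nat.le_zero, card_eq_zero, filter_eq_empty_iff,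
    mem_univ, true_implies, not_and, not_not]

theorem totalScore_lt_totalScore (I : PSInstance n m) (D : ι → Fin m → Bool)
    (deleg : Fin n → Option ι) {j j' : Fin m}
    (hdeleg : ∀ i d, deleg i = some d → D d j = true → D d j' = true)
    (hdirect : ∀ i, deleg i = none → (I.visible i j && I.intrinsic i j) = true →
      (I.visible i j' && I.intrinsic i j') = true)
    {i₀ : Fin n} (hi₀ : deleg i₀ = none)
    (hj : (I.visible i₀ j && I.intrinsic i₀ j) = false)
    (hj' : (I.visible i₀ j' && I.intrinsic i₀ j') = true) :
    I.totalScore D deleg j < I.totalScore D deleg j' := by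
  refine card_lt_card ((ssubset_iff_of_subset fun i hi => ?_).2 ⟨i₀, ?_, ?_⟩)
  · simp only [mem_filter, mem_univ, true_and] at hi ⊢
    cases h : deleg i with
    | none => rw [h] at hi; exact hdirect i h hi
    | some d => rw [h] at hi; exact hdeleg i d h hi
  · simp [hi₀, hj']
  · simp [hi₀, hj]

end PSInstance

theorem Fin.card_le_of_forall_divNat_eq {q r : ℕ} {S : Finset (Fin (q * r))} {b : Fin q}
    (hS : ∀ i ∈ S, i.divNat = b) : S.card ≤ r := by
  have hinj : Set.InjOn Fin.modNat (S : Set (Fin (q * r))) := fun i hi i' hi' h => by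
    rw [← Fin.divNat_mkDivMod_modNat i, ← Fin.divNat_mkDivMod_modNat i', h, hS i hi, hS i' hi']
  simpa using card_le_card_of_injOn Fin.modNat (fun _ _ => mem_coe.2 (mem_univ _)) hinj

namespace HardInstance

open PSInstance

def proposalEquiv (q : ℕ) : Fin (q + q + 1) ≃ Option (Fin q ⊕ Fin q) :=
  (finSuccEquiv (q + q)).trans (Equiv.optionCongr finSumFinEquiv.symm)

variable {q r : ℕ}

/-- Voter `i` is member `i.modNat` of block `i.divNat`, and the leader of its block when
`i.modNat = 0`. Proposal `none` is the hidden optimum; block `b` sees exactly `some (inl b)`,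
which the whole block approves, and `some (inr b)`, which only its leader approves. -/
def approves (i : Fin (q * r)) : Option (Fin q ⊕ Fin q) → Bool
  | none => true
  | some (.inl b) => i.divNat = b
  | some (.inr b) => i.divNat = b ∧ (i.modNat : ℕ) = 0

def reveals (i : Fin (q * r)) : Option (Fin q ⊕ Fin q) → Bool
  | none => false
  | some (.inl b) | some (.inr b) => i.divNat = b

def inst (q r : ℕ) : PSInstance (q * r) (q + q + 1) where
  intrinsic i j := approves i (proposalEquiv q j)
  visible i j := reveals i (proposalEquiv q j)

def hidden (q : ℕ) : Fin (q + q + 1) := (proposalEquiv q).symm none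

def common (b : Fin q) : Fin (q + q + 1) := (proposalEquiv q).symm (some (.inl b))

def leaderOnly (b : Fin q) : Fin (q + q + 1) := (proposalEquiv q).symm (some (.inr b))

theorem rset_eq (i : Fin (q * r)) :
    (inst q r).Rset i = {common i.divNat, leaderOnly i.divNat} := by
  ext j
  obtain ⟨p, rfl⟩ := (proposalEquiv q).symm.surjective j
  rw [Rset, mem_filter]
  simp only [mem_univ, true_and, inst, Equiv.apply_symm_apply]
  rcases p with _ | b | b <;> simp [reveals, common, leaderOnly, eq_comm (a := i.divNat)]

theorem mi_eq_two (i : Fin (q * r)) : (inst q r).mi i = 2 := by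
  rw [mi, rset_eq, card_pair]
  simp [common, leaderOnly]

theorem card_le_of_coherent {S : Finset (Fin (q * r))}
    (hS : ∀ i ∈ S, ∀ i' ∈ S, (inst q r).Rset i = (inst q r).Rset i') : S.card ≤ r := by
  rcases S.eq_empty_or_nonempty with rfl | ⟨i₀, hi₀⟩
  · simp
  refine Fin.card_le_of_forall_divNat_eq (b := i₀.divNat) fun i hi => ?_
  have hmem := hS i hi i₀ hi₀ ▸ (show common i.divNat ∈ (inst q r).Rset i by simp [rset_eq])
  simpa [rset_eq, common, leaderOnly] using hmem

def block (r : ℕ) (b : Fin q) : Finset (Fin (q * r)) := univ.image (Fin.mkDivMod b)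

theorem coherent_block (b : Fin q) :
    ∀ i ∈ block r b, ∀ i' ∈ block r b, (inst q r).Rset i = (inst q r).Rset i' := by
  simp [block, rset_eq]

theorem card_block (b : Fin q) : (block r b).card = r := by
  rw [block, card_image_of_injective _ fun p p' h => by simpa using congrArg Fin.modNat h]
  simp

theorem sc_hidden : (inst q r).sc (hidden q) = q * r := by
  simp [sc, inst, hidden, approves]

theorem isOpt_hidden : (inst q r).IsOpt (hidden q) := fun j => by
  rw [sc_hidden]
  exact (card_filter_le _ _).trans_eq (by simp)

theorem sc_le_of_ne_hidden {j : Fin (q + q + 1)} (hj : j ≠ hidden q) : (inst q r).sc j ≤ r := by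
  obtain ⟨p, rfl⟩ := (proposalEquiv q).symm.surjective j
  rcases p with _ | b | b
  · exact absurd rfl hj
  all_goals
    refine Fin.card_le_of_forall_divNat_eq (b := b) fun i hi => ?_
    simp only [inst, approves, mem_filter, Equiv.apply_symm_apply, decide_eq_true_eq] at hi
    simp_all

theorem attracted_two_iff (i : Fin (q * r)) (t : Fin (q + q + 1) → Bool) :
    (inst q r).Attracted 2 i t ↔
      ∀ j, (inst q r).visible i j = true → (inst q r).intrinsic i j = t j :=
  attracted_iff_forall_visible _ (by rw [mi_eq_two]; omega) t

theorem common_of_attracted {i : Fin (q * r)} {t : Fin (q + q + 1) → Bool}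
    (h : (inst q r).Attracted 2 i t) : t (common i.divNat) = true := by
  have := (attracted_two_iff i t).1 h (common i.divNat) (by simp [inst, common, reveals])
  simpa [inst, common, approves] using this.symm

theorem exists_not_attracted (hr : 2 ≤ r) (t : Fin (q + q + 1) → Bool) (b : Fin q) :
    ∃ i : Fin (q * r), i.divNat = b ∧ ¬ (inst q r).Attracted 2 i t := by
  by_contra! h
  have agree (p : Fin r) :
      (inst q r).intrinsic (Fin.mkDivMod b p) (leaderOnly b) = t (leaderOnly b) :=
    (attracted_two_iff _ t).1 (h _ (Fin.divNat_mkDivMod b p)) _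
      (by simp [inst, leaderOnly, reveals])
  have h0 := agree ⟨0, by omega⟩
  have h1 := agree ⟨1, by omega⟩
  rw [← h0] at h1
  simp only [inst, leaderOnly, approves, Equiv.apply_symm_apply, Fin.divNat_mkDivMod,
    Fin.modNat_mkDivMod, decide_eq_decide] at h1
  simp at h1

theorem not_elected_hidden (hr : 2 ≤ r) (hq : 0 < q) {ι : Type} (t : Fin (q + q + 1) → Bool)
    {deleg : Fin (q * r) → Option ι}
    (hdeleg : (inst q r).ValidDeleg (fun _ => 2) (fun _ => t) deleg) :
    ¬ (inst q r).Elected (fun _ => t) deleg (hidden q) := by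
  obtain ⟨b, hb⟩ : ∃ b : Fin q, ∀ i d, deleg i = some d → t (common b) = true := by
    by_cases h : ∃ i d, deleg i = some d
    · obtain ⟨i, d, hd⟩ := h
      exact ⟨i.divNat, fun _ _ _ => common_of_attracted (hdeleg.1 i d hd)⟩
    · push Not at h
      exact ⟨⟨0, hq⟩, fun i d hd => absurd hd (h i d)⟩
  obtain ⟨i₀, hi₀b, hi₀⟩ := exists_not_attracted hr t b
  have hnone : deleg i₀ = none :=
    Option.eq_none_iff_forall_ne_some.2 fun d hd => hi₀ (hdeleg.1 i₀ d hd)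
  intro hel
  refine (hel.1 (common b)).not_gt (totalScore_lt_totalScore _ _ deleg
    (fun i d hd _ => hb i d hd) (fun i _ h => ?_) hnone ?_ ?_)
  · simp [inst, hidden, reveals] at h
  · simp [inst, hidden, reveals]
  · simp [inst, common, reveals, approves, hi₀b]

end HardInstance

/-- For every `r ≥ 2` and every positive `n` divisible by `r` there is an
instance with `n` voters and some reluctance parameter `k > 0` whose largest coherent set
has size `r`, the optimal intrinsic score is `n`, and every single dRep leads to an
elected proposal of intrinsic score at most `r` (no better than `n/r`-approximation). -/
theorem stmt6 (r n : ℕ) (hr : 2 ≤ r) (hn : 0 < n) (hdvd : r ∣ n) :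
    ∃ (m k : ℕ) (I : PSInstance n m), 0 < k ∧
      (∀ S : Finset (Fin n), (∀ i ∈ S, ∀ i' ∈ S, I.Rset i = I.Rset i') → S.card ≤ r) ∧
      (∃ S : Finset (Fin n), (∀ i ∈ S, ∀ i' ∈ S, I.Rset i = I.Rset i') ∧ S.card = r) ∧
      (∃ j, I.IsOpt j ∧ I.sc j = n) ∧
      ∀ t : Fin m → Bool, ∀ deleg : Fin n → Option Unit,
        I.ValidDeleg (fun _ => k) (fun _ => t) deleg →
        ∀ j, I.Elected (fun _ => t) deleg j → I.sc j ≤ r := by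
  obtain ⟨q, rfl⟩ : ∃ q, n = q * r := hdvd.imp fun q hq => hq.trans (mul_comm r q)
  have hq : 0 < q := pos_of_mul_pos_left hn (Nat.zero_le r)
  refine ⟨q + q + 1, 2, HardInstance.inst q r, two_pos,
    fun S hS => HardInstance.card_le_of_coherent hS,
    ⟨_, HardInstance.coherent_block ⟨0, hq⟩, HardInstance.card_block ⟨0, hq⟩⟩,
    ⟨_, HardInstance.isOpt_hidden, HardInstance.sc_hidden⟩, ?_⟩
  intro t deleg hdeleg j hj
  by_cases h : j = HardInstance.hidden q
  · exact absurd (h ▸ hj) (HardInstance.not_elected_hidden hr hq t hdeleg)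
  · exact HardInstance.sc_le_of_ne_hidden h
end

section
/- Under majority agreement (k = 0), two dReps suffice to elect the intrinsically optimal proposal: if D consists of the all-zeros dRep and the all-ones dRep, then every voter delegates to some dRep in D, and with ties broken in favor of the proposal with maximum intrinsic score, the winner of the resulting election equals the intrinsic winner win(P). -/
/-!
The distances of a revealed ballot to a type `t` and to its complement add up to `m_i`, so every
voter is within `⌊m_i / 2⌋` of the all-zeros or the all-ones ballot and therefore delegates. Then
every voter's effective ballot is constant, all proposals tie in total score, and the tie-breaking
rule elects a proposal of maximum intrinsic score.
-/

open Finset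

namespace PSInstance

variable {n m : ℕ} (I : PSInstance n m)

theorem dist_add_dist_not (i : Fin n) (t : Fin m → Bool) :
    I.dist i t + I.dist i (fun j => !t j) = I.mi i := by
  simp only [dist, mi, Rset, card_filter, ← sum_add_distrib]
  refine sum_congr rfl fun j _ => ?_
  cases I.visible i j <;> cases I.intrinsic i j <;> cases t j <;> rfl

theorem attracted_zero_or_attracted_zero_not (i : Fin n) (t : Fin m → Bool) :
    I.Attracted 0 i t ∨ I.Attracted 0 i (fun j => !t j) := by
  have := I.dist_add_dist_not i t
  unfold Attracted
  omega

theorem exists_attracted_zero_const (i : Fin n) : ∃ b : Bool, I.Attracted 0 i (fun _ => b) :=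
  (I.attracted_zero_or_attracted_zero_not i fun _ => false).elim (⟨false, ·⟩) (⟨true, ·⟩)

variable {I} {ι : Type} {D : ι → Fin m → Bool} {deleg : Fin n → Option ι}

theorem ValidDeleg.ne_none {k : Fin n → ℕ} (hdeleg : I.ValidDeleg k D deleg)
    (hattr : ∀ i, ∃ d, I.Attracted (k i) i (D d)) (i : Fin n) : deleg i ≠ none :=
  hdeleg.2 i (hattr i)

theorem totalScore_eq_of_ne_none (hD : ∀ d j j', D d j = D d j')
    (hdeleg : ∀ i, deleg i ≠ none) (j j' : Fin m) :
    I.totalScore D deleg j = I.totalScore D deleg j' := by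
  unfold totalScore
  congr 1
  refine filter_congr fun i _ => ?_
  obtain ⟨d, hd⟩ := Option.ne_none_iff_exists'.mp (hdeleg i)
  simp only [hd, hD d j j']

theorem Elected.isOpt_of_totalScore_eq {j : Fin m} (hj : I.Elected D deleg j)
    (hscore : ∀ j', I.totalScore D deleg j' = I.totalScore D deleg j) : I.IsOpt j :=
  fun j' => hj.2 j' (hscore j')

end PSInstance

/-- Under majority agreement, the pair consisting of the all-zeros dRep and
the all-ones dRep attracts every voter, and every elected proposal (ties broken toward
maximum intrinsic score) has intrinsic score equal to the optimum, i.e. the intrinsic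
winner is elected. -/
theorem stmt9 (n m : ℕ) (I : PSInstance n m) (jopt : Fin m) (hopt : I.IsOpt jopt) :
    (∀ i, ∃ b : Bool, I.Attracted 0 i (fun _ => b)) ∧
    ∀ deleg : Fin n → Option Bool,
      I.ValidDeleg (fun _ => 0) (fun b _ => b) deleg →
      ∀ j, I.Elected (fun b _ => b) deleg j → I.sc j = I.sc jopt := by
  refine ⟨I.exists_attracted_zero_const, fun deleg hdeleg j hj => ?_⟩
  have hall : ∀ i, deleg i ≠ none := hdeleg.ne_none I.exists_attracted_zero_const
  have hscore : ∀ j',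
      I.totalScore (fun b _ => b) deleg j' = I.totalScore (fun b _ => b) deleg j :=
    fun j' => PSInstance.totalScore_eq_of_ne_none (fun _ _ _ => rfl) hall j' j
  exact le_antisymm (hopt j) (hj.isOpt_of_totalScore_eq hscore jopt)
end

section
/- In any instance of proxy selection with majority agreement (k = 0), let N' be the set of voters who intrinsically approve the optimal proposal win(P). Then max(|A(dRep0)|, |A(dRep1)|) ≥ |N'|/2, where dRep0 approves only win(P) and dRep1 approves every proposal; i.e., at least half of the voters in N' are attracted by one of these two dReps. -/
open Finset

namespace PSInstance

variable {n m : ℕ} (I : PSInstance n m) (i : Fin n)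

theorem dist_add_dist_le_mi {t t' : Fin m → Bool}
    (hcover : ∀ j, I.visible i j → I.intrinsic i j = t j ∨ I.intrinsic i j = t' j) :
    I.dist i t + I.dist i t' ≤ I.mi i := by
  unfold dist mi Rset
  rw [← card_union_of_disjoint]
  · exact card_le_card fun j hj => by simp only [mem_union, mem_filter] at hj ⊢; tauto
  · exact disjoint_filter.2 fun j _ h h' => by
      rcases hcover j h.1 with ht | ht' <;> simp_all

theorem attracted_zero_or_of_dist_add_dist_le {t t' : Fin m → Bool}
    (h : I.dist i t + I.dist i t' ≤ I.mi i) :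
    I.Attracted 0 i t ∨ I.Attracted 0 i t' := by
  unfold Attracted
  omega

end PSInstance

theorem Finset.card_le_two_mul_max_of_subset_union {α : Type*} [DecidableEq α]
    {s A B : Finset α} (h : s ⊆ A ∪ B) : #s ≤ 2 * max #A #B :=
  calc #s ≤ #(A ∪ B) := card_le_card h
    _ ≤ #A + #B := card_union_le A B
    _ ≤ 2 * max #A #B := by omega

theorem stmt12_general (n m : ℕ) (I : PSInstance n m) (jopt : Fin m) :
    (Finset.univ.filter fun i => I.intrinsic i jopt = true).card ≤
      2 * max
        ((Finset.univ.filter fun i =>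
          I.Attracted 0 i (fun j => decide (j = jopt))).card)
        ((Finset.univ.filter fun i => I.Attracted 0 i (fun _ => true)).card) := by
  refine card_le_two_mul_max_of_subset_union fun i hi => ?_
  have happroves : I.intrinsic i jopt = true := (mem_filter.1 hi).2
  -- On `jopt` both dReps agree with the voter; elsewhere they disagree with each other.
  have hcover : ∀ j, I.visible i j →
      I.intrinsic i j = decide (j = jopt) ∨ I.intrinsic i j = true := by
    intro j _
    by_cases hj : j = jopt
    · simp [hj, happroves]
    · cases I.intrinsic i j <;> simp [hj]
  simpa only [mem_union, mem_filter, mem_univ, true_and] using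
    I.attracted_zero_or_of_dist_add_dist_le i (I.dist_add_dist_le_mi i hcover)

/-- Under majority agreement, with `N'` the set of voters intrinsically
approving the optimal proposal, `max(|A(dRep0)|, |A(dRep1)|) ≥ |N'|/2`, where dRep0
approves only the optimal proposal and dRep1 approves everything. -/
theorem stmt12 (n m : ℕ) (I : PSInstance n m) (jopt : Fin m) (hopt : I.IsOpt jopt) :
    (Finset.univ.filter fun i => I.intrinsic i jopt = true).card ≤
      2 * max
        ((Finset.univ.filter fun i =>
          I.Attracted 0 i (fun j => decide (j = jopt))).card)
        ((Finset.univ.filter fun i => I.Attracted 0 i (fun _ => true)).card) :=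
  stmt12_general n m I jopt
end

section
/- For every k > 0 and every ε > 0 there exists an instance of proxy selection with n = 2^k voters on which no set of at most 2^{k−1} dReps achieves a (2 − ε)-approximation when ties may be broken adversarially: the optimal proposal has intrinsic score 2^k but the elected proposal has intrinsic score 2^{k−1}. -/
open Finset

lemma card_testBit_aux (k b : ℕ) (hb : b < k) :
    (univ.filter fun i : Fin (2 ^ k) => Nat.testBit i.val b = true).card = 2 ^ (k - 1) := by
  set A := univ.filter fun i : Fin (2 ^ k) => Nat.testBit i.val b = true with hA
  set B := univ.filter fun i : Fin (2 ^ k) => ¬ (Nat.testBit i.val b = true) with hB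
  have hxorlt : ∀ i : Fin (2 ^ k), i.val ^^^ 2 ^ b < 2 ^ k := fun i =>
    Nat.xor_lt_two_pow i.isLt (Nat.pow_lt_pow_right (by norm_num) hb)
  have hbit : ∀ i : Fin (2 ^ k), (i.val ^^^ 2 ^ b).testBit b = ! i.val.testBit b := by
    intro i
    simp [Nat.testBit_xor, Nat.testBit_two_pow_self]
  have hcardAB : A.card = B.card := by
    apply card_bij' (fun i _ => (⟨i.val ^^^ 2 ^ b, hxorlt i⟩ : Fin (2 ^ k)))
      (fun i _ => (⟨i.val ^^^ 2 ^ b, hxorlt i⟩ : Fin (2 ^ k)))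
    · intro a ha
      simp only [hA, mem_filter, mem_univ, true_and] at ha
      simp [hB, hbit, ha]
    · intro a ha
      simp only [hB, mem_filter, mem_univ, true_and, Bool.not_eq_true] at ha
      simp [hA, hbit, ha]
    · intro a _; ext; simp [Nat.xor_xor_cancel_right]
    · intro a _; ext; simp [Nat.xor_xor_cancel_right]
  have hsum : A.card + B.card = 2 ^ k := by
    rw [hA, hB, card_filter_add_card_filter_not]
    simp
  have h2 : A.card + A.card = 2 ^ k := by rw [hcardAB] at hsum ⊢; omega
  have hk1 : 1 ≤ k := Nat.one_le_of_lt (Nat.lt_of_le_of_lt (Nat.zero_le b) hb)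
  have : 2 ^ k = 2 ^ (k - 1) + 2 ^ (k - 1) := by
    rw [← two_mul, ← pow_succ']
    congr 1; omega
  omega

/-- For every `k ≥ 1` there is an instance with `2^k` voters and uniform
reluctance parameter `k` whose optimal intrinsic score is `2^k`, yet for every family of
at most `2^{k-1}` dReps and every valid delegation there is a total-score-maximal proposal
of intrinsic score only `2^{k-1}` (so adversarial tie-breaking gives no better than a
2-approximation). -/
theorem stmt14 (k : ℕ) (hk : 1 ≤ k) :
    ∃ (m : ℕ) (I : PSInstance (2 ^ k) m),
      (∃ j, I.IsOpt j ∧ I.sc j = 2 ^ k) ∧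
      ∀ N : ℕ, N ≤ 2 ^ (k - 1) →
        ∀ (D : Fin N → Fin m → Bool) (deleg : Fin (2 ^ k) → Option (Fin N)),
          I.ValidDeleg (fun _ => k) D deleg →
          ∃ j, (∀ j', I.totalScore D deleg j' ≤ I.totalScore D deleg j) ∧
            I.sc j = 2 ^ (k - 1) := by
  refine ⟨k + 2,
    { intrinsic := fun i j => if j.val = 0 then true else
        if j.val ≤ k then i.val.testBit (j.val - 1) else false
      visible := fun _ j => decide (j.val ≠ 0) }, ?_, ?_⟩
  all_goals set I : PSInstance (2 ^ k) (k + 2) :=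
    { intrinsic := fun i j => if j.val = 0 then true else
        if j.val ≤ k then i.val.testBit (j.val - 1) else false
      visible := fun _ j => decide (j.val ≠ 0) } with hI
  · -- optimal proposal
    refine ⟨⟨0, by omega⟩, ?_, ?_⟩
    · intro j'
      apply card_le_card
      intro i _
      simp [PSInstance.sc, hI]
    · simp [PSInstance.sc, hI, filter_true_of_mem]
  · intro N hN D deleg hvalid
    -- characterize attraction
    have hmi : ∀ i, I.mi i = k + 1 := by
      intro i
      have hrs : I.Rset i = univ.filter fun j : Fin (k + 2) => ¬ j.val = 0 := by
        simp [PSInstance.Rset, hI]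
      have h0 : (univ.filter fun j : Fin (k + 2) => j.val = 0).card = 1 := by
        have : (univ.filter fun j : Fin (k + 2) => j.val = 0) = {⟨0, by omega⟩} := by
          ext j; simp only [mem_filter, mem_univ, true_and, mem_singleton, Fin.ext_iff]
        rw [this]; simp
      have hadd := card_filter_add_card_filter_not
        (s := (univ : Finset (Fin (k + 2)))) (p := fun j => j.val = 0)
      simp only [card_univ, Fintype.card_fin] at hadd
      rw [PSInstance.mi, hrs]
      omega
    have hattr : ∀ (i : Fin (2 ^ k)) (t : Fin (k + 2) → Bool),
        I.Attracted k i t ↔ ∀ j : Fin (k + 2), j.val ≠ 0 → I.intrinsic i j = t j := by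
      intro i t
      rw [PSInstance.Attracted, hmi]
      have h1 : (k + 1 - k) / 2 = 0 := by omega
      rw [h1, Nat.le_zero, PSInstance.dist, card_eq_zero, filter_eq_empty_iff]
      constructor
      · intro h j hj
        by_contra hne
        exact h (mem_univ j) ⟨by simpa [hI] using hj, hne⟩
      · intro h j _
        rintro ⟨hv, hne⟩
        have : j.val ≠ 0 := by
          by_contra h0; simp [hI, h0] at hv; exact hv (by simpa using h0)
        exact hne (h j this)
    -- a dRep attracts at most one voter
    have hinj : ∀ (i i' : Fin (2 ^ k)) (t : Fin (k + 2) → Bool),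
        I.Attracted k i t → I.Attracted k i' t → i = i' := by
      intro i i' t hi hi'
      rw [hattr] at hi hi'
      apply Fin.ext
      apply Nat.eq_of_testBit_eq
      intro b
      rcases lt_or_ge b k with hb | hb
      · have hj : (⟨b + 1, by omega⟩ : Fin (k + 2)).val ≠ 0 := by simp
        have e1 := hi ⟨b + 1, by omega⟩ hj
        have e2 := hi' ⟨b + 1, by omega⟩ hj
        simp only [hI, show ((⟨b + 1, by omega⟩ : Fin (k + 2)) : ℕ) = b + 1 from rfl,
          if_neg (show ¬ (b + 1 = 0) by omega), if_pos (show b + 1 ≤ k from hb),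
          Nat.add_sub_cancel] at e1 e2
        rw [e1, e2]
      · have h2 : (2 : ℕ) ^ k ≤ 2 ^ b := Nat.pow_le_pow_right (by norm_num) hb
        rw [Nat.testBit_eq_false_of_lt (lt_of_lt_of_le i.isLt h2),
          Nat.testBit_eq_false_of_lt (lt_of_lt_of_le i'.isLt h2)]
    -- total score of visible proposals equals intrinsic score
    have hts : ∀ j : Fin (k + 2), j.val ≠ 0 → I.totalScore D deleg j = I.sc j := by
      intro j hj
      rw [PSInstance.totalScore, PSInstance.sc]
      congr 1
      apply filter_congr
      intro i _
      cases hdi : deleg i with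
      | none =>
        simp only [hdi]
        simp [hj, hI, show j ≠ 0 by simpa using hj]
      | some d =>
        have hatt := hvalid.1 i d hdi
        rw [hattr] at hatt
        have h3 := hatt j hj
        simp only [hdi]
        constructor
        · intro h; exact h3.trans h
        · intro h; exact h3.symm.trans h
    -- total score of the hidden proposal is at most N
    have hhid : I.totalScore D deleg ⟨0, by omega⟩ ≤ N := by
      rcases Nat.eq_zero_or_pos N with hN0 | hN0
      · subst hN0
        have : I.totalScore D deleg ⟨0, by omega⟩ = 0 := by
          rw [PSInstance.totalScore, card_eq_zero, filter_eq_empty_iff]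
          intro i _
          cases hdi : deleg i with
          | none => simp [hI]
          | some d => exact d.elim0
        omega
      · have hle : I.totalScore D deleg ⟨0, by omega⟩ ≤ (univ : Finset (Fin N)).card := by
          rw [PSInstance.totalScore]
          apply card_le_card_of_injOn (fun i => (deleg i).getD ⟨0, hN0⟩)
          · intro i _; exact mem_univ _
          · intro i hi i' hi' heq
            simp only [mem_coe, mem_filter, mem_univ, true_and] at hi hi'
            obtain ⟨d, hd⟩ : ∃ d, deleg i = some d := by
              cases hdi : deleg i with
              | none => rw [hdi] at hi; simp [hI] at hi
              | some d => exact ⟨d, rfl⟩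
            obtain ⟨d', hd'⟩ : ∃ d', deleg i' = some d' := by
              cases hdi : deleg i' with
              | none => rw [hdi] at hi'; simp [hI] at hi'
              | some d => exact ⟨d, rfl⟩
            simp only [hd, hd', Option.getD_some] at heq
            subst heq
            exact hinj i i' (D d) (hvalid.1 i d hd) (hvalid.1 i' d hd')
        simpa using hle
    -- intrinsic scores of visible proposals
    have hscbit : ∀ j : Fin (k + 2), j.val ≠ 0 → j.val ≤ k → I.sc j = 2 ^ (k - 1) := by
      intro j hj hjk
      rw [PSInstance.sc]
      have : (univ.filter fun i : Fin (2 ^ k) => I.intrinsic i j = true) =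
          univ.filter fun i : Fin (2 ^ k) => Nat.testBit i.val (j.val - 1) = true := by
        apply filter_congr
        intro i _
        simp [hI, hj, hjk, show j ≠ 0 by simpa using hj]
      rw [this]
      exact card_testBit_aux k (j.val - 1) (by omega)
    -- the elected proposal
    refine ⟨⟨k, by omega⟩, ?_, hscbit ⟨k, by omega⟩ (by simp; omega) le_rfl⟩
    intro j'
    have hjk : I.totalScore D deleg ⟨k, by omega⟩ = 2 ^ (k - 1) := by
      rw [hts ⟨k, by omega⟩ (by simp; omega),
        hscbit ⟨k, by omega⟩ (by simp; omega) le_rfl]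
    rw [hjk]
    rcases Nat.eq_zero_or_pos j'.val with h0 | h0
    · have : j' = ⟨0, by omega⟩ := Fin.ext h0
      rw [this]
      exact le_trans hhid hN
    · rw [hts j' (by omega)]
      rcases le_or_gt j'.val k with hle | hgt
      · rw [hscbit j' (by omega) hle]
      · have : I.sc j' = 0 := by
          rw [PSInstance.sc, card_eq_zero, filter_eq_empty_iff]
          intro i _
          simp [hI, (show ¬ (j' : ℕ) = 0 by omega), (show ¬ (j' : ℕ) ≤ k by omega),
              (show j' ≠ 0 from fun h => by subst h; simp at h0)]
        rw [this]
        exact Nat.zero_le _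
end
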